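/- Let M be an m×n complex matrix with singular value decomposition M = Σ_{j=1}^{min(m,n)} σ_j(M) u_j v_jᴴ, where σ_1(M) ≥ σ_2(M) ≥ … ≥ 0 and (u_j), (v_j) are orthonormal families in ℂ^m and ℂ^n, and let ρ be an integer with 1 ≤ ρ < min(m,n). Then the ρ-truncation M_ρ = Σ_{j=1}^{ρ} σ_j(M) u_j v_jᴴ satisfies ‖M − M_ρ‖_F² = Σ_{j=ρ+1}^{min(m,n)} σ_j(M)², and for every m×n complex matrix N of rank at most ρ one has ‖M − N‖_F² ≥ Σ_{j=ρ+1}^{min(m,n)} σ_j(M)²; that is, M_ρ is a closest rank-ρ approximation of M in the Frobenius norm. -/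

import Mathlib

/-!
Let `W` be the column space of a matrix `N` of rank at most `ρ`, `P` the orthogonal projection
onto `W`, and `tⱼ = ‖P uⱼ‖² ∈ [0, 1]`. Testing `M - N` on the orthonormal vectors `vⱼ`, Bessel's
inequality and `N vⱼ ∈ W` give
`‖M - N‖_F² ≥ ∑ⱼ ‖σⱼ uⱼ - N vⱼ‖² ≥ ∑ⱼ (‖σⱼ uⱼ‖² - ‖P (σⱼ uⱼ)‖²) = ∑ⱼ σⱼ² (1 - tⱼ)`.
Bessel's inequality in `W` also gives `∑ⱼ tⱼ ≤ dim W ≤ ρ`, and since the `σⱼ²` decrease, the sum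
`∑ⱼ σⱼ² (1 - tⱼ)` is smallest when the whole weight of the `tⱼ` sits on the `ρ` largest singular
values, where it equals `∑_{j ≥ ρ} σⱼ²`. The truncation attains this value because `M - M_ρ` is
the singular value expansion restricted to the indices `j ≥ ρ`.
-/

noncomputable def frobNorm {α β : Type*} [Fintype α] [Fintype β] (A : Matrix α β ℂ) : ℝ :=
  Real.sqrt (∑ i, ∑ j, ‖A i j‖ ^ 2)

open Finset Matrix WithLp

section InnerProductSpace

variable {𝕜 E ι : Type*} [RCLike 𝕜] [NormedAddCommGroup E] [InnerProductSpace 𝕜 E]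

theorem Orthonormal.norm_sum_smul_sq {v : ι → E} (hv : Orthonormal 𝕜 v) (l : ι → 𝕜)
    (s : Finset ι) : ‖∑ i ∈ s, l i • v i‖ ^ 2 = ∑ i ∈ s, ‖l i‖ ^ 2 := by
  rw [@norm_sq_eq_re_inner 𝕜, hv.inner_sum]
  simp_rw [RCLike.conj_mul, ← RCLike.ofReal_pow, ← RCLike.ofReal_sum, RCLike.ofReal_re]

theorem Submodule.norm_sq_sub_norm_sq_starProjection_le (K : Submodule 𝕜 E)
    [K.HasOrthogonalProjection] (x : E) {y : E} (hy : y ∈ K) :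
    ‖x‖ ^ 2 - ‖K.starProjection x‖ ^ 2 ≤ ‖x - y‖ ^ 2 := by
  have hperp : ‖x - K.starProjection x‖ ^ 2 = ‖x‖ ^ 2 - ‖K.starProjection x‖ ^ 2 := by
    rw [norm_sq_eq_add_norm_sq_starProjection x K, starProjection_orthogonal_val]
    ring
  have hmin : ‖x - K.starProjection x‖ ≤ ‖x - y‖ := by
    rw [starProjection_minimal]
    exact ciInf_le ⟨0, Set.forall_mem_range.2 fun _ => norm_nonneg _⟩ (⟨y, hy⟩ : K)
  rw [← hperp]
  gcongr

theorem Orthonormal.sum_norm_sq_starProjection_le_finrank {u : ι → E} (hu : Orthonormal 𝕜 u)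
    (s : Finset ι) (K : Submodule 𝕜 E) [FiniteDimensional 𝕜 K] :
    ∑ j ∈ s, ‖K.starProjection (u j)‖ ^ 2 ≤ Module.finrank 𝕜 K := by
  let b := stdOrthonormalBasis 𝕜 K
  have hparseval : ∀ x, ‖K.starProjection x‖ ^ 2 = ∑ r, ‖inner 𝕜 (b r : E) x‖ ^ 2 := fun x => by
    rw [K.starProjection_apply, ← Submodule.coe_norm, ← b.sum_sq_norm_inner_right]
    simp
  calc ∑ j ∈ s, ‖K.starProjection (u j)‖ ^ 2
      = ∑ r, ∑ j ∈ s, ‖inner 𝕜 (u j) (b r : E)‖ ^ 2 := by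
        simp_rw [hparseval, norm_inner_symm (u _)]
        exact sum_comm
    _ ≤ ∑ r, ‖(b r : E)‖ ^ 2 := sum_le_sum fun r _ => hu.sum_inner_products_le _
    _ = Module.finrank 𝕜 K := by simp [← Submodule.coe_norm, b.orthonormal.1 _]

end InnerProductSpace

theorem sum_compl_le_sum_mul_one_sub {ι : Type*} [Fintype ι] [DecidableEq ι] (S : Finset ι)
    {c t : ι → ℝ} {p : ℝ} (hp : 0 ≤ p) (hcS : ∀ j ∈ S, p ≤ c j) (hcSc : ∀ j ∉ S, c j ≤ p)
    (ht1 : ∀ j ∈ S, t j ≤ 1) (ht0 : ∀ j ∉ S, 0 ≤ t j) (ht : ∑ j, t j ≤ #S) :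
    ∑ j ∈ Sᶜ, c j ≤ ∑ j, c j * (1 - t j) := by
  -- termwise, `(c j - p) * (𝟙[j ∈ S] - t j) ≥ 0`
  have hterm : ∀ j, (if j ∈ S then 0 else c j) + p * ((if j ∈ S then 1 else 0) - t j)
      ≤ c j * (1 - t j) := fun j => by
    split_ifs with hj
    · nlinarith [mul_nonneg (sub_nonneg.2 (hcS j hj)) (sub_nonneg.2 (ht1 j hj))]
    · nlinarith [mul_le_mul_of_nonneg_right (hcSc j hj) (ht0 j hj)]
  calc ∑ j ∈ Sᶜ, c j ≤ ∑ j ∈ Sᶜ, c j + p * (#S - ∑ j, t j) :=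
        le_add_of_nonneg_right (mul_nonneg hp (sub_nonneg.2 ht))
    _ = ∑ j, ((if j ∈ S then 0 else c j) + p * ((if j ∈ S then 1 else 0) - t j)) := by
        simp [sum_add_distrib, ← mul_sum, sum_sub_distrib, sum_ite, filter_notMem_eq_sdiff,
          compl_eq_univ_sdiff]
    _ ≤ ∑ j, c j * (1 - t j) := sum_le_sum fun j _ => hterm j

section Matrix

variable {α β ι : Type*}

theorem frobNorm_sq_eq_sum_norm_sq_row [Fintype α] [Fintype β] (A : Matrix α β ℂ) :
    frobNorm A ^ 2 = ∑ i, ‖toLp 2 (A i)‖ ^ 2 := by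
  rw [frobNorm, Real.sq_sqrt (by positivity)]
  simp [EuclideanSpace.norm_sq_eq]

theorem frobNorm_sq_eq_sum_norm_sq_col [Fintype α] [Fintype β] (A : Matrix α β ℂ) :
    frobNorm A ^ 2 = ∑ k, ‖toLp 2 (Aᵀ k)‖ ^ 2 := by
  rw [frobNorm, Real.sq_sqrt (by positivity), sum_comm]
  simp [EuclideanSpace.norm_sq_eq]

theorem orthonormal_toLp_iff [Fintype α] [DecidableEq ι] (u : ι → α → ℂ) :
    Orthonormal ℂ (fun j => toLp 2 (u j)) ↔
      ∀ j j', ∑ i, starRingEnd ℂ (u j i) * u j' i = if j = j' then 1 else 0 := by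
  simp [orthonormal_iff_ite, EuclideanSpace.inner_toLp_toLp, dotProduct, mul_comm]

theorem sum_norm_sq_mulVec_le_frobNorm_sq [Fintype α] [Fintype β] {v : ι → β → ℂ}
    (hv : Orthonormal ℂ fun j => toLp 2 (v j)) (s : Finset ι) (A : Matrix α β ℂ) :
    ∑ j ∈ s, ‖toLp 2 (A *ᵥ v j)‖ ^ 2 ≤ frobNorm A ^ 2 := by
  have hrow : ∀ j i, (A *ᵥ v j) i = inner ℂ (toLp 2 (star (A i))) (toLp 2 (v j)) := fun j i => by
    simp [EuclideanSpace.inner_toLp_toLp, mulVec, dotProduct_comm]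
  calc ∑ j ∈ s, ‖toLp 2 (A *ᵥ v j)‖ ^ 2
      = ∑ i, ∑ j ∈ s, ‖inner ℂ (toLp 2 (v j)) (toLp 2 (star (A i)))‖ ^ 2 := by
        simp_rw [EuclideanSpace.norm_sq_eq, hrow, norm_inner_symm (toLp 2 (star (A _)))]
        exact sum_comm
    _ ≤ ∑ i, ‖toLp 2 (star (A i))‖ ^ 2 := sum_le_sum fun i _ => hv.sum_inner_products_le _
    _ = frobNorm A ^ 2 := by simp [frobNorm_sq_eq_sum_norm_sq_row, EuclideanSpace.norm_sq_eq]

def outerSum (S : Finset ι) (σ : ι → ℝ) (u : ι → α → ℂ) (v : ι → β → ℂ) : Matrix α β ℂ :=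
  ∑ j ∈ S, Matrix.of fun i k => (σ j : ℂ) * u j i * starRingEnd ℂ (v j k)

theorem outerSum_sub_outerSum_filter (S : Finset ι) (p : ι → Prop) [DecidablePred p]
    (σ : ι → ℝ) (u : ι → α → ℂ) (v : ι → β → ℂ) :
    outerSum S σ u v - outerSum (S.filter p) σ u v = outerSum (S.filter (¬ p ·)) σ u v := by
  rw [outerSum, outerSum, outerSum, ← sum_filter_add_sum_filter_not S p, add_sub_cancel_left]

theorem outerSum_mulVec [Fintype β] [DecidableEq ι] {S : Finset ι} {v : ι → β → ℂ}
    (hv : Orthonormal ℂ fun j => toLp 2 (v j)) (σ : ι → ℝ) (u : ι → α → ℂ) {j : ι}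
    (hj : j ∈ S) : outerSum S σ u v *ᵥ v j = (σ j : ℂ) • u j := by
  have hinner := (orthonormal_toLp_iff v).1 hv
  ext i
  simp only [outerSum, sum_mulVec, Finset.sum_apply]
  simp [mulVec, dotProduct, mul_assoc, ← mul_sum, hinner, hj]

theorem frobNorm_outerSum_sq [Fintype α] [Fintype β] {u : ι → α → ℂ}
    (hu : Orthonormal ℂ fun j => toLp 2 (u j)) (S : Finset ι) (σ : ι → ℝ) (v : ι → β → ℂ) :
    frobNorm (outerSum S σ u v) ^ 2 = ∑ j ∈ S, σ j ^ 2 * ‖toLp 2 (v j)‖ ^ 2 := by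
  have hcol : ∀ k, toLp 2 ((outerSum S σ u v)ᵀ k)
      = ∑ j ∈ S, ((σ j : ℂ) * starRingEnd ℂ (v j k)) • toLp 2 (u j) := fun k => by
    ext i
    simp [outerSum, Matrix.sum_apply, mul_right_comm]
  rw [frobNorm_sq_eq_sum_norm_sq_col]
  simp_rw [hcol, hu.norm_sum_smul_sq, norm_mul, mul_pow, RCLike.norm_conj, Complex.norm_real,
    Real.norm_eq_abs, sq_abs, EuclideanSpace.norm_sq_eq, mul_sum]
  exact sum_comm

theorem sum_sq_tail_le_frobNorm_outerSum_sub_sq [Fintype α] [Fintype β] {K ρ : ℕ}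
    (hρ : ρ < K) {σ : Fin K → ℝ} (hσ : Antitone σ) (hσ0 : ∀ j, 0 ≤ σ j) {u : Fin K → α → ℂ}
    {v : Fin K → β → ℂ} (hu : Orthonormal ℂ fun j => toLp 2 (u j))
    (hv : Orthonormal ℂ fun j => toLp 2 (v j)) {N : Matrix α β ℂ} (hN : N.rank ≤ ρ) :
    ∑ j ∈ univ.filter (fun j : Fin K => ρ ≤ (j : ℕ)), σ j ^ 2
      ≤ frobNorm (outerSum univ σ u v - N) ^ 2 := by
  let W : Submodule ℂ (EuclideanSpace ℂ α) :=
    (LinearMap.range N.mulVecLin).map (WithLp.linearEquiv 2 ℂ (α → ℂ)).symm.toLinearMap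
  let t j := ‖W.starProjection (toLp 2 (u j))‖ ^ 2
  have ht1 : ∀ j, t j ≤ 1 := fun j => by
    simpa [t, hu.1 j] using
      pow_le_pow_left₀ (norm_nonneg _) (W.norm_starProjection_apply_le (toLp 2 (u j))) 2
  have ht : ∑ j, t j ≤ ρ := calc
    ∑ j, t j ≤ Module.finrank ℂ W := hu.sum_norm_sq_starProjection_le_finrank univ W
    _ ≤ ρ := by exact_mod_cast (LinearEquiv.finrank_map_eq _ _).trans_le hN
  have hcol : ∀ j, σ j ^ 2 * (1 - t j) ≤ ‖toLp 2 ((outerSum univ σ u v - N) *ᵥ v j)‖ ^ 2 := by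
    intro j
    have hNv : toLp 2 (N *ᵥ v j) ∈ W := Submodule.mem_map_of_mem (LinearMap.mem_range_self _ _)
    rw [sub_mulVec, outerSum_mulVec hv σ u (mem_univ j), toLp_sub, toLp_smul]
    convert W.norm_sq_sub_norm_sq_starProjection_le ((σ j : ℂ) • toLp 2 (u j)) hNv using 1
    rw [map_smul, norm_smul, norm_smul, hu.1 j]
    simp only [t, Complex.norm_real, Real.norm_eq_abs, mul_pow, sq_abs]
    ring
  have hsq : Antitone fun j => σ j ^ 2 := fun i j hij => pow_le_pow_left₀ (hσ0 j) (hσ hij) 2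
  have hcompl : univ.filter (fun j : Fin K => ρ ≤ (j : ℕ))
      = (univ.filter (fun j : Fin K => (j : ℕ) < ρ))ᶜ := by
    ext
    simp
  calc ∑ j ∈ univ.filter (fun j : Fin K => ρ ≤ (j : ℕ)), σ j ^ 2
      ≤ ∑ j, σ j ^ 2 * (1 - t j) := by
        rw [hcompl]
        refine sum_compl_le_sum_mul_one_sub _ (p := σ ⟨ρ, hρ⟩ ^ 2) (sq_nonneg _)
          (fun j hj => hsq ?_) (fun j hj => hsq ?_) (fun j _ => ht1 j) (fun j _ => by positivity) ?_
        · simpa [Fin.le_def] using (mem_filter.1 hj).2.le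
        · simpa [Fin.le_def] using hj
        · simpa [Fin.card_filter_val_lt, hρ.le] using ht
    _ ≤ ∑ j, ‖toLp 2 ((outerSum univ σ u v - N) *ᵥ v j)‖ ^ 2 := sum_le_sum fun j _ => hcol j
    _ ≤ frobNorm (outerSum univ σ u v - N) ^ 2 := sum_norm_sq_mulVec_le_frobNorm_sq hv _ _

end Matrix

theorem truncated_svd_is_best_frobenius_approx_general {m n ρ : ℕ} (hρ : ρ < min m n)
    (M : Matrix (Fin m) (Fin n) ℂ)
    (σ : Fin (min m n) → ℝ)
    (u : Fin (min m n) → Fin m → ℂ) (v : Fin (min m n) → Fin n → ℂ)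
    (hmono : ∀ i j : Fin (min m n), i ≤ j → σ j ≤ σ i)
    (hnonneg : ∀ j, 0 ≤ σ j)
    (hu : ∀ j j' : Fin (min m n),
      ∑ i, (starRingEnd ℂ) (u j i) * u j' i = if j = j' then 1 else 0)
    (hv : ∀ j j' : Fin (min m n),
      ∑ k, (starRingEnd ℂ) (v j k) * v j' k = if j = j' then 1 else 0)
    (hM : M = ∑ j : Fin (min m n),
      Matrix.of fun i k => (σ j : ℂ) * u j i * (starRingEnd ℂ) (v j k))
    (Mρ : Matrix (Fin m) (Fin n) ℂ)
    (hMρ : Mρ = ∑ j ∈ Finset.univ.filter (fun j : Fin (min m n) => (j : ℕ) < ρ),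
      Matrix.of fun i k => (σ j : ℂ) * u j i * (starRingEnd ℂ) (v j k)) :
    frobNorm (M - Mρ) ^ 2
        = ∑ j ∈ Finset.univ.filter (fun j : Fin (min m n) => ρ ≤ (j : ℕ)), σ j ^ 2 ∧
      ∀ N : Matrix (Fin m) (Fin n) ℂ, N.rank ≤ ρ →
        (∑ j ∈ Finset.univ.filter (fun j : Fin (min m n) => ρ ≤ (j : ℕ)), σ j ^ 2)
          ≤ frobNorm (M - N) ^ 2 := by
  have hU := (orthonormal_toLp_iff u).2 hu
  have hV := (orthonormal_toLp_iff v).2 hv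
  replace hM : M = outerSum univ σ u v := hM
  replace hMρ : Mρ = outerSum (univ.filter fun j : Fin (min m n) => (j : ℕ) < ρ) σ u v := hMρ
  have htail : M - Mρ = outerSum (univ.filter fun j : Fin (min m n) => ρ ≤ (j : ℕ)) σ u v := by
    simpa only [not_lt, hM, hMρ] using
      outerSum_sub_outerSum_filter univ (fun j : Fin (min m n) => (j : ℕ) < ρ) σ u v
  refine ⟨?_, fun N hN => hM ▸ sum_sq_tail_le_frobNorm_outerSum_sub_sq hρ hmono hnonneg hU hV hN⟩
  simp [htail, frobNorm_outerSum_sq hU, hV.1]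

/-- **Eckart–Young in the Frobenius norm.**  If `M = ∑ σ_j u_j v_jᴴ` is a singular value
decomposition of an `m×n` complex matrix with nonincreasing nonnegative `σ` and orthonormal
families `u`, `v`, and `1 ≤ ρ < min m n`, then the ρ-truncation `Mρ = ∑_{j<ρ} σ_j u_j v_jᴴ`
satisfies `‖M − Mρ‖_F² = ∑_{j≥ρ} σ_j²` (0-based indexing) and every matrix `N` of rank at
most `ρ` satisfies `‖M − N‖_F² ≥ ∑_{j≥ρ} σ_j²`. -/
theorem truncated_svd_is_best_frobenius_approx {m n ρ : ℕ} (hρ1 : 1 ≤ ρ) (hρ : ρ < min m n)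
    (M : Matrix (Fin m) (Fin n) ℂ)
    (σ : Fin (min m n) → ℝ)
    (u : Fin (min m n) → Fin m → ℂ) (v : Fin (min m n) → Fin n → ℂ)
    (hmono : ∀ i j : Fin (min m n), i ≤ j → σ j ≤ σ i)
    (hnonneg : ∀ j, 0 ≤ σ j)
    (hu : ∀ j j' : Fin (min m n),
      ∑ i, (starRingEnd ℂ) (u j i) * u j' i = if j = j' then 1 else 0)
    (hv : ∀ j j' : Fin (min m n),
      ∑ k, (starRingEnd ℂ) (v j k) * v j' k = if j = j' then 1 else 0)
    (hM : M = ∑ j : Fin (min m n),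
      Matrix.of fun i k => (σ j : ℂ) * u j i * (starRingEnd ℂ) (v j k))
    (Mρ : Matrix (Fin m) (Fin n) ℂ)
    (hMρ : Mρ = ∑ j ∈ Finset.univ.filter (fun j : Fin (min m n) => (j : ℕ) < ρ),
      Matrix.of fun i k => (σ j : ℂ) * u j i * (starRingEnd ℂ) (v j k)) :
    frobNorm (M - Mρ) ^ 2
        = ∑ j ∈ Finset.univ.filter (fun j : Fin (min m n) => ρ ≤ (j : ℕ)), σ j ^ 2 ∧
      ∀ N : Matrix (Fin m) (Fin n) ℂ, N.rank ≤ ρ →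
        (∑ j ∈ Finset.univ.filter (fun j : Fin (min m n) => ρ ≤ (j : ℕ)), σ j ^ 2)
          ≤ frobNorm (M - N) ^ 2 :=
  truncated_svd_is_best_frobenius_approx_general hρ M σ u v hmono hnonneg hu hv hM Mρ hMρ
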